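/- arXiv:math/0405561 — 5 statements merged into one kernel-verified Lean document; each statement's English description precedes it below -/
import Mathlib

section
/- For sequences (a_n), (A_n) of real numbers with A_n = ∑_{d | n} a_d, and for real x with 0 < |x| < π (under suitable absolute convergence hypotheses, e.g. a_n = 0 for all but finitely many n), ∏_{n=1}^∞ ((n/x) · sin(x/n))^{a_n} = ∏_{n=1}^∞ (1 - x²/(n²π²))^{A_n}. -/
/-!
Taking logarithms in Euler's product `sin y / y = ∏ₖ (1 - y² / (k² π²))` at `y = x / n` gives
`log ((n / x) sin (x / n)) = ∑ₖ log (1 - x² / ((n k)² π²))` for every `n ≥ 1`. Multiplying by `aₙ`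
and adding over the finitely many `n` with `aₙ ≠ 0`, the term `log (1 - x² / (m² π²))` is collected
once for every divisor `n` of `m`, hence with total coefficient `Aₘ`; exponentiating gives the
identity.
-/

open Real Filter Topology Function

theorem hasSum_ite_mem_divisors {M : Type*} [AddCommMonoid M] [TopologicalSpace M]
    {g : ℕ → M} {c : M} {n : ℕ} (hn : n ≠ 0) (h : HasSum (fun k => g (n * (k + 1))) c) :
    HasSum (fun m => if n ∈ m.divisors then g m else 0) c := by
  have hinj : Injective fun k => n * (k + 1) := fun k l hkl => by simpa [hn] using hkl
  refine (hinj.hasSum_iff fun m hm => if_neg ?_).mp (by simpa [comp_def, hn] using h)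
  intro hmem
  obtain ⟨⟨j, rfl⟩, hj⟩ := Nat.mem_divisors.mp hmem
  obtain ⟨k, rfl⟩ := Nat.exists_eq_succ_of_ne_zero (right_ne_zero_of_mul hj)
  exact hm ⟨k, rfl⟩

theorem hasSum_mul_sum_divisors {R : Type*} [NonUnitalNonAssocSemiring R] [TopologicalSpace R]
    [IsTopologicalSemiring R] {a g S : ℕ → R} {s : Finset ℕ} (hs0 : 0 ∉ s)
    (ha : ∀ n, n ≠ 0 → n ∉ s → a n = 0) (h : ∀ n ∈ s, HasSum (fun k => g (n * (k + 1))) (S n)) :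
    HasSum (fun m => g m * ∑ d ∈ m.divisors, a d) (∑ n ∈ s, S n * a n) := by
  classical
  refine (hasSum_sum fun n hn =>
    (hasSum_ite_mem_divisors (ne_of_mem_of_not_mem hn hs0) (h n hn)).mul_right (a n)).congr_fun
    fun m => ?_
  simp only [ite_mul, zero_mul, Finset.sum_ite_mem, Finset.mul_sum]
  refine (Finset.sum_subset Finset.inter_subset_right fun d hd hds => ?_).symm
  rw [ha d (Nat.pos_of_mem_divisors hd).ne' fun hs => hds (Finset.mem_inter.mpr ⟨hs, hd⟩),
    mul_zero]

theorem hasSum_mul_sum_divisors_succ {R : Type*} [NonUnitalNonAssocRing R] [TopologicalSpace R]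
    [IsTopologicalRing R] {a g S : ℕ → R} {t : Finset ℕ} (ht : ∀ n ∉ t, a (n + 1) = 0)
    (h : ∀ n ∈ t, HasSum (fun k => g ((n + 1) * (k + 1))) (S n)) :
    HasSum (fun m => g (m + 1) * ∑ d ∈ (m + 1).divisors, a d) (∑ n ∈ t, S n * a (n + 1)) := by
  -- `S (n - 1)` is only ever evaluated at `n = m + 1`, so the truncated subtraction is harmless
  have h' := hasSum_mul_sum_divisors (a := a) (g := g) (S := fun n => S (n - 1))
    (s := t.map (addRightEmbedding 1)) (by simp) (fun n hn0 hn => ?_) (fun n hn => ?_)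
  · simpa [Finset.sum_map] using (hasSum_nat_add_iff' 1).mpr h'
  · obtain ⟨m, rfl⟩ := Nat.exists_eq_succ_of_ne_zero hn0
    exact ht m (by simpa using hn)
  · obtain ⟨m, hm, rfl⟩ := Finset.mem_map.mp hn
    simpa using h m hm

theorem sin_div_self_pos {y : ℝ} (hy0 : y ≠ 0) (hy : |y| < π) : 0 < sin y / y := by
  rcases hy0.lt_or_gt with hneg | hpos
  · rw [← neg_div_neg_eq, ← sin_neg]
    exact div_pos (sin_pos_of_pos_of_lt_pi (neg_pos.mpr hneg) (by rwa [abs_of_neg hneg] at hy))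
      (neg_pos.mpr hneg)
  · exact div_pos (sin_pos_of_pos_of_lt_pi hpos (by rwa [abs_of_pos hpos] at hy)) hpos

theorem one_sub_sq_div_succ_sq_mul_pi_sq_pos {y : ℝ} (hy : |y| < π) (k : ℕ) :
    0 < 1 - y ^ 2 / (((k : ℝ) + 1) ^ 2 * π ^ 2) := by
  have hk : (1 : ℝ) ≤ ((k : ℝ) + 1) ^ 2 := one_le_pow₀ (by linarith [k.cast_nonneg (α := ℝ)])
  have hy2 : y ^ 2 < π ^ 2 :=
    sq_lt_sq' (by linarith [neg_abs_le y]) ((le_abs_self y).trans_lt hy)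
  rw [sub_pos, div_lt_one (by positivity)]
  nlinarith [sq_nonneg π]

theorem tendsto_euler_sin_div_prod {y : ℝ} (hy0 : y ≠ 0) :
    Tendsto (fun N => ∏ k ∈ Finset.range N, (1 - y ^ 2 / (((k : ℝ) + 1) ^ 2 * π ^ 2))) atTop
      (𝓝 (sin y / y)) := by
  have h := (tendsto_euler_sin_prod (y / π)).div_const y
  rw [mul_div_cancel₀ _ pi_ne_zero] at h
  refine h.congr fun N => ?_
  rw [mul_div_cancel_left₀ _ hy0]
  refine Finset.prod_congr rfl fun k _ => ?_
  rw [div_pow, div_div, mul_comm (π ^ 2)]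

theorem hasSum_log_euler_sin_div_prod {y : ℝ} (hy0 : y ≠ 0) (hy : |y| < π) :
    HasSum (fun k : ℕ => log (1 - y ^ 2 / (((k : ℝ) + 1) ^ 2 * π ^ 2))) (log (sin y / y)) := by
  have hsum : Summable fun k : ℕ => log (1 - y ^ 2 / (((k : ℝ) + 1) ^ 2 * π ^ 2)) := by
    have := (summable_pow_div_add (y ^ 2 / π ^ 2) 2 1 one_lt_two).neg
    convert Real.summable_log_one_add_of_summable this using 3 with k
    rw [Real.norm_of_nonneg (by positivity), Nat.cast_one, div_div, mul_comm (π ^ 2),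
      sub_eq_add_neg]
  refine hsum.hasSum_iff_tendsto_nat.mpr ?_
  refine ((continuousAt_log (sin_div_self_pos hy0 hy).ne').tendsto.comp
    (tendsto_euler_sin_div_prod hy0)).congr fun N => ?_
  exact log_prod fun k _ => (one_sub_sq_div_succ_sq_mul_pi_sq_pos hy k).ne'

theorem tprod_zpow_eq_exp_of_hasSum_log_mul {ι : Type*} {f : ι → ℝ} {k : ι → ℤ} {s : ℝ}
    (hf : ∀ i, 0 < f i) (h : HasSum (fun i => log (f i) * k i) s) :
    ∏' i, f i ^ k i = exp s :=
  (h.rexp.congr_fun fun i => by simp [← rpow_intCast, rpow_def_of_pos (hf i)]).tprod_eq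

theorem abs_div_natCast_lt {x : ℝ} (hx : |x| < π) {n : ℕ} (hn : n ≠ 0) : |x / n| < π := by
  rw [abs_div, Nat.abs_cast]
  exact (div_le_self (abs_nonneg x) (by exact_mod_cast Nat.one_le_iff_ne_zero.mpr hn)).trans_lt hx

theorem natCast_div_mul_sin_div_eq (x : ℝ) (n : ℕ) :
    n / x * sin (x / n) = sin (x / n) / (x / n) := by
  rw [div_div_eq_mul_div, mul_comm, mul_div_assoc]

theorem natCast_div_mul_sin_div_pos {x : ℝ} (hx0 : x ≠ 0) (hx : |x| < π) {n : ℕ} (hn : n ≠ 0) :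
    0 < n / x * sin (x / n) := by
  rw [natCast_div_mul_sin_div_eq]
  exact sin_div_self_pos (div_ne_zero hx0 (Nat.cast_ne_zero.mpr hn)) (abs_div_natCast_lt hx hn)

theorem hasSum_log_euler_sin_div_prod_natCast {x : ℝ} (hx0 : x ≠ 0) (hx : |x| < π) {n : ℕ}
    (hn : n ≠ 0) :
    HasSum (fun k : ℕ => log (1 - x ^ 2 / (((n * (k + 1) : ℕ) : ℝ) ^ 2 * π ^ 2)))
      (log (n / x * sin (x / n))) := by
  rw [natCast_div_mul_sin_div_eq]
  convert hasSum_log_euler_sin_div_prod (div_ne_zero hx0 (Nat.cast_ne_zero.mpr hn))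
    (abs_div_natCast_lt hx hn) using 4 with k
  have : (n : ℝ) ≠ 0 := Nat.cast_ne_zero.mpr hn
  push_cast
  field_simp

/-- Pólya–Szegő Exercise 67: for a finitely supported integer sequence `a` with divisor
sums `A n = ∑_{d ∣ n} a d`, and `0 < |x| < π`,
`∏ ((n/x) sin(x/n))^{a_n} = ∏ (1 - x²/(n²π²))^{A_n}`. -/
theorem polya_szego_67 (a A : ℕ → ℤ)
    (hfin : (Function.support a).Finite)
    (hA : ∀ n, 1 ≤ n → A n = ∑ d ∈ n.divisors, a d)
    (x : ℝ) (hx0 : 0 < |x|) (hxpi : |x| < π) :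
    ∏' n : ℕ, ((((n : ℝ) + 1) / x) * Real.sin (x / ((n : ℝ) + 1))) ^ (a (n + 1))
      = ∏' n : ℕ, (1 - x ^ 2 / (((n : ℝ) + 1) ^ 2 * π ^ 2)) ^ (A (n + 1)) := by
  have hx : x ≠ 0 := abs_pos.mp hx0
  set t := (hfin.preimage Nat.succ_injective.injOn).toFinset
  have ht : ∀ n ∉ t, (a (n + 1) : ℝ) = 0 := fun n hn => by simpa [t] using hn
  set S : ℕ → ℝ := fun n => log (((n : ℝ) + 1) / x * sin (x / ((n : ℝ) + 1)))
  have hS : ∀ n : ℕ, 0 < ((n : ℝ) + 1) / x * sin (x / ((n : ℝ) + 1)) := fun n => by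
    exact_mod_cast natCast_div_mul_sin_div_pos hx hxpi n.succ_ne_zero
  have hL : HasSum (fun n => S n * a (n + 1)) (∑ n ∈ t, S n * a (n + 1)) :=
    hasSum_sum_of_ne_finset_zero fun n hn => by rw [ht n hn, mul_zero]
  have hR : HasSum (fun n : ℕ => log (1 - x ^ 2 / (((n : ℝ) + 1) ^ 2 * π ^ 2)) * A (n + 1))
      (∑ n ∈ t, S n * a (n + 1)) := by
    refine (hasSum_mul_sum_divisors_succ (a := fun n => (a n : ℝ))
      (g := fun m => log (1 - x ^ 2 / ((m : ℝ) ^ 2 * π ^ 2))) ht fun n _ => ?_).congr_fun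
      fun n => ?_
    · simpa using hasSum_log_euler_sin_div_prod_natCast hx hxpi n.succ_ne_zero
    · rw [hA (n + 1) n.succ_pos]
      push_cast
      rfl
  rw [tprod_zpow_eq_exp_of_hasSum_log_mul hS hL,
    tprod_zpow_eq_exp_of_hasSum_log_mul (one_sub_sq_div_succ_sq_mul_pi_sq_pos hxpi) hR]
end

section
/- For sequences (a_n), (B_n) with B_n = ∑_{d | n} (-1)^{d-1} a_{n/d}, with (a_n) finitely supported and integer-valued, and real x with 0 < |x| < 2π, x/(2n) not a multiple of π, one has ∏_{n=1}^∞ ((x/(2n)) · cot(x/(2n)))^{a_n} = ∏_{n=1}^∞ (1 - x²/(n²π²))^{B_n}. -/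
/-!
Euler's product `sinc t = ∏_{k ≥ 1} (1 - t² / (k² π²))` and `y cot y = sinc (2y) / sinc y ²` give
`y cot y = ∏_{k ≥ 1} (1 - 4y² / (k² π²)) ^ (-1) ^ (k + 1)`. For `y = x / (2n)` the `k`-th factor is
the factor of index `m = nk` in Euler's product for `x`. Raising to `a n` and multiplying over the
finitely many `n`, the `m`-th factor collects the exponent `∑_{n ∣ m} (-1) ^ (m / n - 1) a n = B m`.
Since `|x| < 2π`, every factor with `m ≥ 2` is positive, so its exponents add up; the factor
`m = 1`, which vanishes when `|x| = π`, receives the single exponent `a 1`.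
-/

open Finset Real

theorem hasProd_nat_succ_iff {α : Type*} [CommMonoid α] [TopologicalSpace α] {f : ℕ → α}
    {a : α} (h0 : f 0 = 1) : HasProd (fun n ↦ f (n + 1)) a ↔ HasProd f a :=
  Nat.succ_injective.hasProd_iff fun
    | 0, _ => h0
    | m + 1, hm => absurd ⟨m, rfl⟩ hm

theorem tprod_succ_eq_prod_Ico {α : Type*} [CommMonoid α] [TopologicalSpace α] [T2Space α]
    (f : ℕ → α) {N : ℕ} (hf : ∀ n, N < n → f n = 1) :
    ∏' n, f (n + 1) = ∏ n ∈ Ico 1 (N + 1), f n := by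
  rw [prod_Ico_eq_prod_range, Nat.add_sub_cancel, tprod_eq_prod fun n hn ↦
    hf _ (Nat.lt_succ_of_le (not_lt.mp (mt mem_range.mpr hn)))]
  simp only [add_comm]

theorem HasProd.zpow₀ {ι G₀ : Type*} [CommGroupWithZero G₀] [TopologicalSpace G₀]
    [ContinuousInv₀ G₀] [ContinuousMul G₀] [T2Space G₀] {f : ι → G₀} {a : G₀}
    (h : HasProd f a) (ha : a ≠ 0 ∨ ∃ i, f i = 0) (m : ℤ) :
    HasProd (fun i ↦ f i ^ m) (a ^ m) := by
  rcases ha with ha | ⟨i, hi⟩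
  · simpa [HasProd, prod_zpow] using Filter.Tendsto.zpow₀ h m (Or.inl ha)
  · obtain rfl : a = 0 := h.unique (hasProd_zero_of_exists_eq_zero ⟨i, hi⟩)
    rcases eq_or_ne m 0 with rfl | hm
    · simp [hasProd_one]
    · rw [zero_zpow m hm]
      exact hasProd_zero_of_exists_eq_zero ⟨i, by rw [hi, zero_zpow m hm]⟩

theorem hasProd_ite_dvd {α : Type*} [CommMonoid α] [TopologicalSpace α] {g : ℕ → α} {a : α}
    {n : ℕ} (hn : n ≠ 0) (h : HasProd g a) :
    HasProd (fun m ↦ if n ∣ m then g (m / n) else 1) a := by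
  refine ((mul_right_injective₀ hn).hasProd_iff ?_).mp ?_
  · rintro m hm
    exact if_neg fun ⟨k, hk⟩ ↦ hm ⟨k, hk.symm⟩
  · simpa [Function.comp_def, Nat.mul_div_cancel_left _ (Nat.pos_of_ne_zero hn)] using h

theorem prod_zpow_eq_zpow_sum {ι G₀ : Type*} [CommGroupWithZero G₀] (c : G₀) (t : Finset ι)
    (k : ι → ℤ) (h : c ≠ 0 ∨ t.card ≤ 1) : ∏ i ∈ t, c ^ k i = c ^ ∑ i ∈ t, k i := by
  rcases h with hc | ht
  · induction t using cons_induction with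
    | empty => simp
    | cons i t hi ih => rw [prod_cons, sum_cons, zpow_add₀ hc, ih]
  · rcases Nat.le_one_iff_eq_zero_or_eq_one.mp ht with ht | ht
    · simp [card_eq_zero.mp ht]
    · obtain ⟨i, rfl⟩ := card_eq_one.mp ht
      simp

/-- At `m = 0` this is `1`, since `x / 0 = 0`. -/
noncomputable def sincFactor (x : ℝ) (m : ℕ) : ℝ := 1 - x ^ 2 / ((m : ℝ) ^ 2 * π ^ 2)

@[simp] lemma sincFactor_zero (x : ℝ) : sincFactor x 0 = 1 := by simp [sincFactor]

lemma sincFactor_mul (x : ℝ) {n : ℕ} (hn : n ≠ 0) (k : ℕ) :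
    sincFactor x (n * k) = sincFactor (x / n) k := by
  have : (n : ℝ) ≠ 0 := by exact_mod_cast hn
  simp only [sincFactor, Nat.cast_mul]
  congr 1
  field_simp

lemma sincFactor_pos {x : ℝ} {m : ℕ} (h : |x| < m * π) : 0 < sincFactor x m := by
  have hm : 0 < (m : ℝ) * π := (abs_nonneg x).trans_lt h
  rw [sincFactor, sub_pos, ← mul_pow, div_lt_one (pow_pos hm 2), ← sq_abs]
  exact pow_lt_pow_left₀ h (abs_nonneg x) two_ne_zero

lemma exists_sincFactor_eq_zero {x : ℝ} (h : sinc x = 0) : ∃ k, sincFactor x k = 0 := by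
  have hx : x ≠ 0 := by rintro rfl; simp at h
  obtain ⟨k, rfl⟩ := sin_eq_zero_iff.mp (by simpa [sinc_of_ne_zero hx, hx] using h)
  have hk : (k : ℝ) ≠ 0 := by rintro hk; simp [hk] at hx
  refine ⟨k.natAbs, ?_⟩
  have : ((k.natAbs : ℕ) : ℝ) ^ 2 = (k : ℝ) ^ 2 := by
    rw [Nat.cast_natAbs, Int.cast_abs, sq_abs]
  rw [sincFactor, this, mul_pow, div_self (by positivity), sub_self]

theorem hasProd_sincFactor (x : ℝ) : HasProd (sincFactor x) (sinc x) := by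
  rw [← hasProd_nat_succ_iff (sincFactor_zero x)]
  rcases eq_or_ne x 0 with rfl | hx
  · simp [sincFactor, hasProd_one]
  have hmul : Multipliable fun k ↦ sincFactor x (k + 1) := by
    have : Summable fun k : ℕ ↦ -(x ^ 2 / π ^ 2) * (1 / ((k : ℝ) + 1) ^ 2) :=
      ((summable_nat_add_iff 1).mpr (summable_one_div_nat_pow.mpr one_lt_two)).mul_left
        (-(x ^ 2 / π ^ 2)) |>.congr fun k ↦ by push_cast; ring
    refine (Real.multipliable_one_add_of_summable this).congr fun k ↦ ?_
    simp only [sincFactor, Nat.cast_add_one]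
    field_simp
    ring
  rw [hmul.hasProd_iff_tendsto_nat, sinc_of_ne_zero hx]
  convert (Real.tendsto_euler_sin_prod (x / π)).div_const x using 1
  · ext n
    rw [mul_div_cancel₀ x pi_ne_zero, mul_div_cancel_left₀ _ hx]
    refine prod_congr rfl fun k _ ↦ ?_
    simp only [sincFactor, Nat.cast_add_one]
    field_simp
  · rw [mul_div_cancel₀ x pi_ne_zero]

lemma sinc_ne_zero_of_sin_ne_zero {y : ℝ} (hy : sin y ≠ 0) : sinc y ≠ 0 := by
  have hy0 : y ≠ 0 := by rintro rfl; simp at hy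
  rw [sinc_of_ne_zero hy0]
  exact div_ne_zero hy hy0

lemma mul_cot_eq_sinc_div_sinc_sq {y : ℝ} (hy : sin y ≠ 0) :
    y * cot y = sinc (2 * y) / sinc y ^ 2 := by
  have hy0 : y ≠ 0 := by rintro rfl; simp at hy
  rw [sinc_of_ne_zero hy0, sinc_of_ne_zero (mul_ne_zero two_ne_zero hy0), sin_two_mul,
    cot_eq_cos_div_sin]
  field_simp

lemma mul_inv_ite_two_dvd_sq {G₀ : Type*} [GroupWithZero G₀] (c : G₀) (k : ℕ) :
    c * ((if 2 ∣ k then c else 1) ^ 2)⁻¹ = c ^ ((-1 : ℤ) ^ (k + 1)) := by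
  rcases Nat.even_or_odd k with hk | hk
  · rw [if_pos hk.two_dvd, (hk.add_one).neg_one_pow, zpow_neg_one]
    rcases eq_or_ne c 0 with rfl | hc
    · simp
    · rw [sq, mul_inv_rev, mul_inv_cancel_left₀ hc]
  · rw [if_neg (Nat.not_even_iff_odd.mpr hk ∘ even_iff_two_dvd.mpr), (hk.add_one).neg_one_pow,
      zpow_one, one_pow, inv_one, mul_one]

theorem hasProd_mul_cot {y : ℝ} (hy : sin y ≠ 0) :
    HasProd (fun k ↦ sincFactor (2 * y) k ^ ((-1 : ℤ) ^ (k + 1))) (y * cot y) := by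
  have hsinc : sinc y ^ 2 ≠ 0 := pow_ne_zero 2 (sinc_ne_zero_of_sin_ne_zero hy)
  have hhalf := hasProd_ite_dvd two_ne_zero (hasProd_sincFactor y)
  rw [mul_cot_eq_sinc_div_sinc_sq hy, div_eq_mul_inv]
  refine ((hasProd_sincFactor (2 * y)).mul ((hhalf.pow 2).inv₀ hsinc)).congr_fun fun k ↦ ?_
  rw [← mul_inv_ite_two_dvd_sq]
  congr 3
  split_ifs with hk
  · obtain ⟨j, rfl⟩ := hk
    rw [sincFactor_mul _ two_ne_zero, Nat.mul_div_cancel_left j two_pos]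
    norm_num
  · rfl

theorem hasProd_mul_cot_zpow {y : ℝ} (hy : sin y ≠ 0) (z : ℤ) :
    HasProd (fun k ↦ (sincFactor (2 * y) k ^ ((-1 : ℤ) ^ (k + 1))) ^ z) ((y * cot y) ^ z) := by
  refine (hasProd_mul_cot hy).zpow₀ ?_ z
  rw [or_iff_not_imp_left, not_not, mul_cot_eq_sinc_div_sinc_sq hy, div_eq_zero_iff]
  rintro (h | h)
  · obtain ⟨k, hk⟩ := exists_sincFactor_eq_zero h
    exact ⟨k, by rw [hk, zero_zpow _ (pow_ne_zero _ (by norm_num))]⟩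
  · exact absurd h (pow_ne_zero 2 (sinc_ne_zero_of_sin_ne_zero hy))

theorem hasProd_ite_dvd_mul_cot_zpow {x : ℝ} {n : ℕ} (hn : n ≠ 0) (hx : sin (x / (2 * n)) ≠ 0)
    (z : ℤ) :
    HasProd (fun m ↦ if n ∣ m then (sincFactor x m ^ ((-1 : ℤ) ^ (m / n + 1))) ^ z else 1)
      ((x / (2 * n) * cot (x / (2 * n))) ^ z) := by
  refine (hasProd_ite_dvd hn (hasProd_mul_cot_zpow hx z)).congr_fun fun m ↦ ?_
  split_ifs with hm
  · obtain ⟨k, rfl⟩ := hm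
    have : (n : ℝ) ≠ 0 := by exact_mod_cast hn
    rw [Nat.mul_div_cancel_left k (Nat.pos_of_ne_zero hn), sincFactor_mul x hn]
    congr 3
    field_simp
  · rfl

theorem sum_filter_dvd_neg_one_pow (a : ℕ → ℤ) {s : Finset ℕ} {m : ℕ} (hm : m ≠ 0)
    (hs : ∀ n ∈ m.divisors, a n ≠ 0 → n ∈ s) :
    ∑ n ∈ s with n ∣ m, (-1) ^ (m / n + 1) * a n
      = ∑ d ∈ m.divisors, (-1) ^ (d - 1) * a (m / d) := by
  rw [← Nat.sum_divisorsAntidiagonal (fun d e ↦ (-1) ^ (d - 1) * a e),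
    Nat.sum_divisorsAntidiagonal' (fun d e ↦ (-1) ^ (d - 1) * a e)]
  calc ∑ n ∈ s with n ∣ m, (-1) ^ (m / n + 1) * a n
      = ∑ n ∈ m.divisors, (-1) ^ (m / n + 1) * a n := by
        refine sum_subset (fun n hn ↦ ?_) fun n hn hns ↦ ?_
        · exact Nat.mem_divisors.mpr ⟨(mem_filter.mp hn).2, hm⟩
        · have : a n = 0 := by
            by_contra h
            exact hns (mem_filter.mpr ⟨hs n hn h, Nat.dvd_of_mem_divisors hn⟩)
          rw [this, mul_zero]
    _ = ∑ n ∈ m.divisors, (-1) ^ (m / n - 1) * a n := by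
        refine sum_congr rfl fun n hn ↦ ?_
        have : 0 < m / n := Nat.div_pos (Nat.divisor_le hn) (Nat.pos_of_mem_divisors hn)
        rw [show m / n + 1 = m / n - 1 + 2 by omega, pow_add, neg_one_sq, mul_one]

theorem prod_ite_dvd_zpow_eq_zpow_sum {G₀ : Type*} [CommGroupWithZero G₀] (c : G₀) (a : ℕ → ℤ)
    {s : Finset ℕ} {m : ℕ} (hm : m ≠ 0) (hs : ∀ n ∈ m.divisors, a n ≠ 0 → n ∈ s)
    (hc : c ≠ 0 ∨ m = 1) :
    ∏ n ∈ s, (if n ∣ m then (c ^ ((-1 : ℤ) ^ (m / n + 1))) ^ a n else 1)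
      = c ^ ∑ d ∈ m.divisors, (-1) ^ (d - 1) * a (m / d) := by
  rw [← prod_filter, ← sum_filter_dvd_neg_one_pow a hm hs]
  simp_rw [← zpow_mul]
  refine prod_zpow_eq_zpow_sum c _ _ (hc.imp_right fun hm1 ↦ card_le_one.mpr fun i hi j hj ↦ ?_)
  subst hm1
  rw [Nat.dvd_one.mp (mem_filter.mp hi).2, Nat.dvd_one.mp (mem_filter.mp hj).2]

theorem polya_szego_68_general (a B : ℕ → ℤ)
    (hfin : (Function.support a).Finite)
    (hB : ∀ n, 1 ≤ n → B n = ∑ d ∈ n.divisors, (-1 : ℤ) ^ (d - 1) * a (n / d))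
    (x : ℝ) (hxpi : |x| < 2 * π)
    (hmult : ∀ n : ℕ, 1 ≤ n → ∀ k : ℤ, x / (2 * n) ≠ k * π) :
    ∏' n : ℕ, ((x / (2 * ((n : ℝ) + 1))) * Real.cot (x / (2 * ((n : ℝ) + 1)))) ^ (a (n + 1))
      = ∏' n : ℕ, (1 - x ^ 2 / (((n : ℝ) + 1) ^ 2 * π ^ 2)) ^ (B (n + 1)) := by
  obtain ⟨N, hN⟩ := hfin.bddAbove
  have ha : ∀ n, N < n → a n = 0 := fun n hn ↦ of_not_not (mt (@hN n) hn.not_ge)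
  have hsin : ∀ n : ℕ, 1 ≤ n → sin (x / (2 * n)) ≠ 0 := fun n hn h ↦ by
    obtain ⟨k, hk⟩ := sin_eq_zero_iff.mp h
    exact hmult n hn k hk.symm
  have hfactor : ∀ m : ℕ, sincFactor x (m + 1) ≠ 0 ∨ m + 1 = 1 := by
    rintro (_ | m)
    · exact .inr rfl
    · refine .inl (sincFactor_pos (hxpi.trans_le ?_)).ne'
      exact mul_le_mul_of_nonneg_right (Nat.ofNat_le_cast.mpr (by omega)) pi_pos.le
  have hprod := hasProd_prod fun n (hn : n ∈ Ico 1 (N + 1)) ↦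
    hasProd_ite_dvd_mul_cot_zpow (Nat.one_le_iff_ne_zero.mp (mem_Ico.mp hn).1)
      (hsin n (mem_Ico.mp hn).1) (a n)
  rw [← hasProd_nat_succ_iff (by simp)] at hprod
  simp_rw [← Nat.cast_add_one]
  rw [tprod_succ_eq_prod_Ico (fun n : ℕ ↦ (x / (2 * n) * cot (x / (2 * n))) ^ a n)
    fun n hn ↦ by rw [ha n hn, zpow_zero], ← (hprod.congr_fun fun m ↦ ?_).tprod_eq]
  rw [prod_ite_dvd_zpow_eq_zpow_sum _ a m.succ_ne_zero (fun n hn han ↦ mem_Ico.mpr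
    ⟨Nat.pos_of_mem_divisors hn, Nat.lt_succ_of_le (hN han)⟩) (hfactor m), ← hB (m + 1) m.succ_pos]
  rfl

/-- Pólya–Szegő Exercise 68: for a finitely supported integer sequence `a` with
`B n = ∑_{d ∣ n} (-1)^{d-1} a (n/d)`, and `0 < |x| < 2π` with each `x/(2n)` not a
multiple of `π`, `∏ ((x/(2n)) cot(x/(2n)))^{a_n} = ∏ (1 - x²/(n²π²))^{B_n}`. -/
theorem polya_szego_68 (a B : ℕ → ℤ)
    (hfin : (Function.support a).Finite)
    (hB : ∀ n, 1 ≤ n → B n = ∑ d ∈ n.divisors, (-1 : ℤ) ^ (d - 1) * a (n / d))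
    (x : ℝ) (hx0 : 0 < |x|) (hxpi : |x| < 2 * π)
    (hmult : ∀ n : ℕ, 1 ≤ n → ∀ k : ℤ, x / (2 * n) ≠ k * π) :
    ∏' n : ℕ, ((x / (2 * ((n : ℝ) + 1))) * Real.cot (x / (2 * ((n : ℝ) + 1)))) ^ (a (n + 1))
      = ∏' n : ℕ, (1 - x ^ 2 / (((n : ℝ) + 1) ^ 2 * π ^ 2)) ^ (B (n + 1)) :=
  polya_szego_68_general a B hfin hB x hxpi hmult
end

section
/- For real x with 0 < |x| < 2π and any positive integer m, the infinite product ∏_{k=1}^∞ (1 - x²/((km)²π²))^{(-1)^{k-1}} converges and equals (x/(2m)) · cot(x/(2m)). -/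
/-!
With `a k = 1 - x²/(k²π²)`, the alternating product `∏ a k ^ (-1)^(k-1)` is the full Euler
product `∏ a k = sin x / x` divided by the square of its even-indexed subproduct
`∏ a (2k) = sin (x/2) / (x/2)`. Both products converge unconditionally, and the second is nonzero
when `0 < |x| < 2π`, so the quotient converges to `(sin x / x) / (sin (x/2) / (x/2))²`, which is
`(x/2) cot (x/2)` because `sin x = 2 sin (x/2) cos (x/2)`. The theorem is the case `x/m`.
-/

open Real

theorem zpow_neg_one_pow_eq_div_sq {K : Type*} [Field K] (a : K) (k : ℕ) :
    a ^ ((-1 : ℤ) ^ k) = a / (if Even k then 1 else a) ^ 2 := by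
  rcases Nat.even_or_odd k with hk | hk
  · simp [hk.neg_one_pow, hk]
  · rw [hk.neg_one_pow, if_neg (Nat.not_even_iff_odd.2 hk), zpow_neg_one]
    rcases eq_or_ne a 0 with rfl | ha
    · simp
    · field_simp

namespace Real

theorem hasProd_euler_sinc (x : ℝ) :
    HasProd (fun k : ℕ => 1 - x ^ 2 / ((k + 1) ^ 2 * π ^ 2)) (sinc x) := by
  rcases eq_or_ne x 0 with rfl | hx
  · simp [hasProd_one]
  have hmult : Multipliable fun k : ℕ => 1 - x ^ 2 / ((k + 1) ^ 2 * π ^ 2) := by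
    refine (Real.multipliable_one_add_of_summable ((summable_pow_div_add (x ^ 2 / π ^ 2) 2 1
      one_lt_two).of_norm.neg)).congr fun k => ?_
    push_cast
    rw [div_div, mul_comm (π ^ 2)]
    ring
  have hlim := Real.tendsto_euler_sin_prod (x / π)
  rw [mul_div_cancel₀ x pi_ne_zero] at hlim
  have heq : x * ∏' k : ℕ, (1 - x ^ 2 / ((k + 1) ^ 2 * π ^ 2)) = sin x := by
    refine tendsto_nhds_unique (hmult.hasProd.tendsto_prod_nat.const_mul x)
      (hlim.congr fun n => ?_)
    congr 1
    refine Finset.prod_congr rfl fun k _ => ?_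
    field_simp
  rw [sinc_of_ne_zero hx, ← heq, mul_div_cancel_left₀ _ hx]
  exact hmult.hasProd

theorem hasProd_euler_sinc_half (x : ℝ) :
    HasProd (fun k : ℕ => if Even k then 1 else 1 - x ^ 2 / ((k + 1) ^ 2 * π ^ 2))
      (sinc (x / 2)) := by
  have hodd : Function.Injective fun j : ℕ => 2 * j + 1 := fun i j h => by
    simp only at h
    omega
  rw [← hodd.hasProd_iff]
  · refine (hasProd_euler_sinc (x / 2)).congr_fun fun j => ?_
    simp only [Function.comp_apply, Nat.not_even_two_mul_add_one, if_false]
    push_cast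
    field_simp
    ring
  · intro k hk
    have hk_even : Even k := Nat.not_odd_iff_even.1 fun ⟨j, hj⟩ => hk ⟨j, hj.symm⟩
    simp [hk_even]

theorem sinc_div_sinc_half_sq {x : ℝ} (hx : sin (x / 2) ≠ 0) :
    sinc x / sinc (x / 2) ^ 2 = x / 2 * cot (x / 2) := by
  have hx2 : x / 2 ≠ 0 := fun h => hx (by rw [h, sin_zero])
  have hx0 : x ≠ 0 := by simpa using hx2
  rw [sinc_of_ne_zero hx0, sinc_of_ne_zero hx2, cot_eq_cos_div_sin]
  conv_lhs => rw [← mul_div_cancel₀ x (two_ne_zero (α := ℝ)), sin_two_mul]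
  field_simp

theorem hasProd_euler_alternating {x : ℝ} (hx : sin (x / 2) ≠ 0) :
    HasProd (fun k : ℕ => (1 - x ^ 2 / ((k + 1) ^ 2 * π ^ 2)) ^ ((-1 : ℤ) ^ k))
      (x / 2 * cot (x / 2)) := by
  have hx2 : x / 2 ≠ 0 := fun h => hx (by rw [h, sin_zero])
  have hsinc : sinc (x / 2) ≠ 0 := by
    rw [sinc_of_ne_zero hx2]
    exact div_ne_zero hx hx2
  rw [← sinc_div_sinc_half_sq hx]
  simp only [zpow_neg_one_pow_eq_div_sq]
  exact (hasProd_euler_sinc x).div₀ ((hasProd_euler_sinc_half x).pow 2) (pow_ne_zero 2 hsinc)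

theorem sin_half_ne_zero {x : ℝ} (hx0 : x ≠ 0) (hx : |x| < 2 * π) : sin (x / 2) ≠ 0 := by
  have hx' := abs_lt.1 hx
  rw [Ne, sin_eq_zero_iff_of_lt_of_lt (by linarith) (by linarith)]
  exact div_ne_zero hx0 two_ne_zero

end Real

/-- Key lemma in Pólya–Szegő Exercise 68: for `0 < |x| < 2π` and `m ≥ 1`, the
alternating-exponent product `∏_k (1 - x²/((km)²π²))^{(-1)^{k-1}}` converges to
`(x/(2m)) cot(x/(2m))`. -/
theorem alternating_sine_product (x : ℝ) (hx0 : 0 < |x|) (hx : |x| < 2 * π)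
    (m : ℕ) (hm : 1 ≤ m) :
    Multipliable (fun k : ℕ =>
        (1 - x ^ 2 / ((((k : ℝ) + 1) * m) ^ 2 * π ^ 2)) ^ ((-1 : ℤ) ^ k)) ∧
    ∏' k : ℕ, (1 - x ^ 2 / ((((k : ℝ) + 1) * m) ^ 2 * π ^ 2)) ^ ((-1 : ℤ) ^ k)
      = (x / (2 * m)) * Real.cot (x / (2 * m)) := by
  have hm1 : (1 : ℝ) ≤ m := by exact_mod_cast hm
  have hm0 : (m : ℝ) ≠ 0 := by positivity
  have hy : |x / m| < 2 * π := by
    rw [abs_div, Nat.abs_cast]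
    exact (div_le_self (abs_nonneg x) hm1).trans_lt hx
  have hprod :=
    hasProd_euler_alternating (sin_half_ne_zero (div_ne_zero (abs_pos.1 hx0) hm0) hy)
  have hfactor (k : ℕ) : x ^ 2 / ((((k : ℝ) + 1) * m) ^ 2 * π ^ 2)
      = (x / m) ^ 2 / ((k + 1) ^ 2 * π ^ 2) := by
    field_simp
  rw [div_div, mul_comm (m : ℝ)] at hprod
  simp only [hfactor]
  exact ⟨hprod.multipliable, hprod.tprod_eq⟩
end

section
/- For all real x ≠ 0, 1/(e^x - 1) = 1/x - 1/2 + 2x ∑_{n=1}^∞ 1/(x² + 4n²π²), where the series converges absolutely. -/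
/-!
Put `z = i x / (2π)` in Euler's expansion `π cot (π z) = 1/z + ∑ₙ (1/(z - n) + 1/(z + n))`.
Since `π z = i x / 2` and `cot (i t) = -i coth t`, the left side becomes `-π i coth (x/2)`,
while each pair of terms becomes `-2π i · 2x / (x² + 4n²π²)`. Dividing by `-2π i` and using
`coth (x/2) / 2 = 1/(e^x - 1) + 1/2` gives the expansion.
-/

open Real Complex

lemma Complex.mem_integerComplement_of_im_ne_zero {z : ℂ} (hz : z.im ≠ 0) :
    z ∈ integerComplement :=
  fun ⟨n, hn⟩ => hz (by simp [← hn])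

lemma I_mul_div_two_pi_mem_integerComplement {x : ℝ} (hx : x ≠ 0) :
    I * x / (2 * π) ∈ integerComplement := by
  apply mem_integerComplement_of_im_ne_zero
  rw [show I * x / (2 * π) = ((x / (2 * π) : ℝ) : ℂ) * I by push_cast; ring, mul_I_im, ofReal_re]
  exact div_ne_zero hx (by positivity)

lemma cotTerm_I_mul_div_two_pi {x : ℝ} (hx : x ≠ 0) (n : ℕ) :
    cotTerm (I * x / (2 * π)) n
      = -(2 * π * I) * (2 * x / (x ^ 2 + 4 * ((n : ℝ) + 1) ^ 2 * π ^ 2) : ℝ) := by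
  have hz := I_mul_div_two_pi_mem_integerComplement hx
  have hprod : (I * x / (2 * π) + (n + 1)) * (I * x / (2 * π) - (n + 1))
      = -(x ^ 2 + 4 * ((n : ℂ) + 1) ^ 2 * π ^ 2) / (4 * π ^ 2) := by
    field_simp
    ring_nf
    rw [I_sq]
    ring
  rw [cotTerm_identity hz, hprod]
  push_cast
  field_simp
  ring

lemma pi_mul_cot_pi_mul_I_mul_div_two_pi (x : ℝ) :
    π * Complex.cot (π * (I * x / (2 * π)))
      = -(π * I) * ((Real.exp x + 1) / (Real.exp x - 1) : ℝ) := by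
  have hexp : 2 * π * I * (I * x / (2 * π)) = -x := by
    field_simp
    rw [I_sq]
    ring
  rw [cot_pi_eq_exp_ratio, hexp, Complex.exp_neg]
  push_cast
  field_simp
  rw [I_sq]
  ring

theorem Real.hasSum_two_mul_div_sq_add_four_mul_sq_pi {x : ℝ} (hx : x ≠ 0) :
    HasSum (fun n : ℕ => 2 * x / (x ^ 2 + 4 * ((n : ℝ) + 1) ^ 2 * π ^ 2))
      ((Real.exp x + 1) / (2 * (Real.exp x - 1)) - 1 / x) := by
  have hz := I_mul_div_two_pi_mem_integerComplement hx
  have hcot : HasSum (cotTerm (I * x / (2 * π)))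
      ((π : ℂ) * Complex.cot (π * (I * x / (2 * π))) - 1 / (I * x / (2 * π))) := by
    rw [cot_series_rep' hz]
    exact (summable_cotTerm hz).hasSum
  have hlimit : -(π * I) * ((Real.exp x + 1) / (Real.exp x - 1) : ℝ) - 1 / (I * x / (2 * π))
      = -(2 * π * I) * ((Real.exp x + 1) / (2 * (Real.exp x - 1)) - 1 / x : ℝ) := by
    push_cast
    field_simp
    rw [I_sq]
    ring
  rw [funext (cotTerm_I_mul_div_two_pi hx), pi_mul_cot_pi_mul_I_mul_div_two_pi x, hlimit] at hcot
  rwa [← Complex.hasSum_ofReal, ← hasSum_mul_left_iff (by simp [pi_ne_zero] : -(2 * π * I) ≠ 0)]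

/-- Partial fraction expansion of `1/(e^x - 1)`:
`1/(e^x-1) = 1/x - 1/2 + 2x ∑_{n≥1} 1/(x²+4n²π²)`, with absolute convergence. -/
theorem coth_partial_fractions (x : ℝ) (hx : x ≠ 0) :
    Summable (fun n : ℕ => |1 / (x ^ 2 + 4 * ((n : ℝ) + 1) ^ 2 * π ^ 2)|) ∧
    1 / (Real.exp x - 1)
      = 1 / x - 1 / 2 + 2 * x * ∑' n : ℕ, 1 / (x ^ 2 + 4 * ((n : ℝ) + 1) ^ 2 * π ^ 2) := by
  have hsum := Real.hasSum_two_mul_div_sq_add_four_mul_sq_pi hx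
  simp only [← mul_one_div (2 * x)] at hsum
  have he : Real.exp x - 1 ≠ 0 := sub_ne_zero.mpr ((Real.exp_eq_one_iff x).not.mpr hx)
  refine ⟨((summable_mul_left_iff (by simpa using hx)).mp hsum.summable).abs, ?_⟩
  rw [← tsum_mul_left, hsum.tsum_eq]
  field_simp
  ring
end

section
/- For real x > 0, the function f(x) = 1/(e^x - 1) - 1/x + 1/2 satisfies 0 < f(x) < min(1/2, x/12) — in particular f(x) = O(x) as x → 0⁺ and f(x) → 1/2 as x → ∞, so the integral ∫_0^∞ f(x) x^{s-1} dx converges for -1 < Re(s) < 0. -/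
/-!
Write `f x = 1/(eˣ - 1) - 1/x + 1/2`. Clearing denominators, `0 < f x` is `tanh (x/2) < x/2`,
i.e. `2 (eˣ - 1) < x (eˣ + 1)`, which holds because the difference vanishes at `0` and has
derivative `1 + (x - 1) eˣ > 0`; `f x < 1/2` is `x < eˣ - 1`; and `f x < x/12` says that `eˣ`
exceeds its (2,2) Padé approximant, which its degree-5 Taylor polynomial already does. Hence
`f x * x^(s-1)` is `O(x^(Re s))` at `0` and `O(x^(Re s - 1))` at `∞`, both integrable when
`-1 < Re s < 0`.
-/

open Real Filter Topology Asymptotics MeasureTheory Set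

namespace Real

theorem exp_sub_one_pos {x : ℝ} (hx : 0 < x) : 0 < exp x - 1 :=
  sub_pos.2 (one_lt_exp_iff.2 hx)

theorem two_mul_exp_sub_one_lt {x : ℝ} (hx : 0 < x) : 2 * (exp x - 1) < x * (exp x + 1) := by
  let g : ℝ → ℝ := fun t => t * (exp t + 1) - 2 * (exp t - 1)
  have hg' : ∀ t, HasDerivAt g (1 + (t - 1) * exp t) t := fun t =>
    (((hasDerivAt_id' t).mul ((hasDerivAt_exp t).add_const 1)).sub
      (((hasDerivAt_exp t).sub_const 1).const_mul 2)).congr_deriv (by ring)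
  have hg'_pos : ∀ t, 0 < t → 0 < 1 + (t - 1) * exp t := fun t ht => by
    have h : -t + 1 < exp (-t) := add_one_lt_exp (neg_ne_zero.2 ht.ne')
    have h' : exp (-t) * exp t = 1 := by rw [← exp_add, neg_add_cancel, exp_zero]
    nlinarith [exp_pos t]
  have hmono : StrictMonoOn g (Ici 0) := by
    refine strictMonoOn_of_deriv_pos (convex_Ici 0) (by fun_prop) fun t ht => ?_
    rw [interior_Ici] at ht
    exact (hg' t).deriv ▸ hg'_pos t ht
  have := hmono self_mem_Ici hx.le hx
  simp only [g, exp_zero] at this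
  linarith

theorem pade_lt_exp_mul {x : ℝ} (hx : 0 < x) :
    x ^ 2 + 6 * x + 12 < exp x * (x ^ 2 - 6 * x + 12) := by
  have htaylor : 1 + x + x ^ 2 / 2 + x ^ 3 / 6 + x ^ 4 / 24 + x ^ 5 / 120 ≤ exp x := by
    simpa [Finset.sum_range_succ, Nat.factorial] using sum_le_exp_of_nonneg hx.le 6
  have hq : 0 < x ^ 2 - 6 * x + 12 := by nlinarith [sq_nonneg (x - 3)]
  -- the Taylor polynomial times `x² - 6x + 12` exceeds `x² + 6x + 12` by `x⁵ (x² - x + 2) / 120`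
  have hr : 0 < x ^ 5 * (x ^ 2 - x + 2) := by
    have : 0 < x ^ 2 - x + 2 := by nlinarith [sq_nonneg (2 * x - 1)]
    positivity
  nlinarith [mul_le_mul_of_nonneg_right htaylor hq.le]

end Real

/-- `x⁻¹ (x / (eˣ - 1) - 1 + x / 2)`: the generating function of the Bernoulli numbers with its
first two terms removed, divided by `x`. -/
noncomputable def bernoulliTail (x : ℝ) : ℝ := 1 / (exp x - 1) - 1 / x + 1 / 2

section bernoulliTail

variable {x : ℝ}

theorem bernoulliTail_eq (hx : 0 < x) :
    bernoulliTail x = (x * (exp x + 1) - 2 * (exp x - 1)) / (2 * x * (exp x - 1)) := by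
  have := (exp_sub_one_pos hx).ne'
  unfold bernoulliTail
  field_simp
  ring

theorem bernoulliTail_pos (hx : 0 < x) : 0 < bernoulliTail x := by
  rw [bernoulliTail_eq hx]
  have := exp_sub_one_pos hx
  exact div_pos (by linarith [two_mul_exp_sub_one_lt hx]) (by positivity)

theorem bernoulliTail_lt_half (hx : 0 < x) : bernoulliTail x < 1 / 2 := by
  have : x < exp x - 1 := by linarith [add_one_lt_exp hx.ne']
  have := one_div_lt_one_div_of_lt hx this
  unfold bernoulliTail
  linarith

theorem bernoulliTail_lt_div_twelve (hx : 0 < x) : bernoulliTail x < x / 12 := by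
  have hE := exp_sub_one_pos hx
  have : x / 12 - bernoulliTail x
      = (exp x * (x ^ 2 - 6 * x + 12) - (x ^ 2 + 6 * x + 12)) / (12 * x * (exp x - 1)) := by
    unfold bernoulliTail
    field_simp
    ring
  have := div_pos (sub_pos.2 (pade_lt_exp_mul hx)) (by positivity : 0 < 12 * x * (exp x - 1))
  linarith

theorem continuousOn_bernoulliTail : ContinuousOn bernoulliTail (Ioi 0) :=
  ((continuousOn_const.div (by fun_prop) fun _ hx => (exp_sub_one_pos hx).ne').sub
    (continuousOn_const.div continuousOn_id fun _ hx => ne_of_gt hx)).add continuousOn_const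

theorem bernoulliTail_isBigO_atTop : bernoulliTail =O[atTop] fun x => x ^ (-0 : ℝ) := by
  refine .of_bound (1 / 2) ?_
  filter_upwards [eventually_gt_atTop 0] with x hx
  rw [neg_zero, rpow_zero, norm_one, mul_one, norm_of_nonneg (bernoulliTail_pos hx).le]
  exact (bernoulliTail_lt_half hx).le

theorem bernoulliTail_isBigO_nhdsGT_zero : bernoulliTail =O[𝓝[>] 0] fun x => x ^ (-(-1) : ℝ) := by
  refine .of_bound (1 / 12) ?_
  filter_upwards [self_mem_nhdsWithin] with x (hx : 0 < x)
  rw [neg_neg, rpow_one, norm_of_nonneg (bernoulliTail_pos hx).le, norm_of_nonneg hx.le]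
  linarith [bernoulliTail_lt_div_twelve hx]

theorem mellinConvergent_bernoulliTail {s : ℂ} (h1 : -1 < s.re) (h2 : s.re < 0) :
    MellinConvergent (fun x => (bernoulliTail x : ℂ)) s :=
  mellinConvergent_of_isBigO_rpow
    ((Complex.continuous_ofReal.comp_continuousOn continuousOn_bernoulliTail).locallyIntegrableOn
      measurableSet_Ioi)
    (Complex.isBigO_ofReal_left.2 bernoulliTail_isBigO_atTop) h2
    (Complex.isBigO_ofReal_left.2 bernoulliTail_isBigO_nhdsGT_zero) h1

end bernoulliTail

/-- Convergence lemma: `f x = 1/(e^x-1) - 1/x + 1/2` satisfies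
`0 < f x < min (1/2) (x/12)` for `x > 0`, and consequently
`∫_0^∞ f(x) x^{s-1} dx` converges for `-1 < Re s < 0`. -/
theorem convergence_lemma :
    (∀ x : ℝ, 0 < x →
      0 < 1 / (Real.exp x - 1) - 1 / x + 1 / 2 ∧
      1 / (Real.exp x - 1) - 1 / x + 1 / 2 < min (1 / 2) (x / 12)) ∧
    (∀ s : ℂ, -1 < s.re → s.re < 0 →
      MeasureTheory.IntegrableOn
        (fun x : ℝ => ((1 / (Real.exp x - 1) - 1 / x + 1 / 2 : ℝ) : ℂ) * (x : ℂ) ^ (s - 1))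
        (Set.Ioi (0 : ℝ))) :=
  ⟨fun _ hx => ⟨bernoulliTail_pos hx,
      lt_min (bernoulliTail_lt_half hx) (bernoulliTail_lt_div_twelve hx)⟩,
    fun _ h1 h2 =>
      (mellinConvergent_bernoulliTail h1 h2).congr_fun (fun _ _ => mul_comm _ _) measurableSet_Ioi⟩
end
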